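/- arXiv:1307.0522 — 5 statements merged into one kernel-verified Lean document; each statement's English description precedes it below -/
import Mathlib

section
/- In the Generalized Alpha Investing procedure, the process A(j) = α·R(j) − V(j) + α·η − W(j) is a sub-martingale with respect to the filtration generated by the rejection indicators: E[A(j) − A(j-1) | R_1, …, R_{j-1}] ≥ 0 for every j. -/
/-!
On the history event of the first `j - 1` outcomes, the update rule makes the increment
`A(j) - A(j-1)` the affine function `(α - [H_j true] - ψ_j) R_j + φ_j` of the single indicator
`R_j`, whose conditional probability of being `1` is at most `κ = α_j` under the null and
`κ = ρ̄_j` under the alternative. For a nonnegative slope the conditional mean is clearly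
nonnegative; for a negative one it is at least `(α - [H_j true] - ψ_j) κ + φ_j`, and the
constraint on `ψ_j` says exactly that this is nonnegative.
-/

open MeasureTheory

/-- The event that the rejection history of the first `j-1` tests equals the
outcome pattern `r` (rejection indicators take values in `{0,1}`). -/
def histEvent {Ω : Type*} (R : ℕ → Ω → ℝ) (j : ℕ) (r : ℕ → Bool) : Set Ω :=
  {ω | ∀ i, 1 ≤ i → i < j → R i ω = if r i then 1 else 0}

def gaiProcess {Ω : Type*} (α η : ℝ) (R V W : ℕ → Ω → ℝ) (j : ℕ) (ω : Ω) : ℝ :=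
  α * (∑ i ∈ Finset.Icc 1 j, R i ω) - (∑ i ∈ Finset.Icc 1 j, V i ω) + α * η - W j ω

lemma gaiProcess_succ {Ω : Type*} (α η : ℝ) (R V W : ℕ → Ω → ℝ) (k : ℕ) (ω : Ω) :
    gaiProcess α η R V W (k + 1) ω =
      gaiProcess α η R V W k ω + α * R (k + 1) ω - V (k + 1) ω - (W (k + 1) ω - W k ω) := by
  simp only [gaiProcess, Finset.sum_Icc_succ_top (Nat.le_add_left 1 k)]
  ring

lemma measurableSet_histEvent {Ω : Type*} [MeasurableSpace Ω] {R : ℕ → Ω → ℝ}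
    (hR : ∀ i, Measurable (R i)) (j : ℕ) (r : ℕ → Bool) :
    MeasurableSet (histEvent R j r) := by
  simp only [histEvent, Set.ofPred_forall]
  exact .iInter fun i => .iInter fun _ => .iInter fun _ =>
    hR i (measurableSet_singleton _)

section Bernoulli

variable {Ω : Type*} [MeasurableSpace Ω] {μ : Measure Ω} {X : Ω → ℝ}

lemma integrable_of_eq_zero_or_one [IsFiniteMeasure μ] (hX : Measurable X)
    (h01 : ∀ ω, X ω = 0 ∨ X ω = 1) : Integrable X μ :=
  .of_bound hX.aestronglyMeasurable 1 <| .of_forall fun ω => by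
    rcases h01 ω with h | h <;> simp [h]

lemma setIntegral_eq_measureReal_of_eq_zero_or_one (hX : Measurable X)
    (h01 : ∀ ω, X ω = 0 ∨ X ω = 1) (s : Set Ω) :
    ∫ ω in s, X ω ∂μ = μ.real ({ω | X ω = 1} ∩ s) := by
  have hX_indicator : X = {ω | X ω = 1}.indicator fun _ => 1 := by
    ext ω
    rcases h01 ω with h | h <;> simp [Set.indicator, h]
  have hmeas : MeasurableSet {ω | X ω = 1} := hX (measurableSet_singleton 1)
  conv_lhs => rw [hX_indicator]
  rw [setIntegral_indicator hmeas, setIntegral_const, Set.inter_comm]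
  simp

lemma setIntegral_mul_add_nonneg_of_measure_le [IsFiniteMeasure μ] (hX : Measurable X)
    (h01 : ∀ ω, X ω = 0 ∨ X ω = 1) {s : Set Ω} {κ c φ : ℝ} (hκ : 0 ≤ κ) (hφ : 0 ≤ φ)
    (hc : -φ ≤ c * κ) (hprob : μ ({ω | X ω = 1} ∩ s) ≤ ENNReal.ofReal κ * μ s) :
    0 ≤ ∫ ω in s, (c * X ω + φ) ∂μ := by
  have hint : IntegrableOn X s μ := (integrable_of_eq_zero_or_one hX h01).integrableOn
  rw [integral_add (hint.const_mul _) (integrable_const φ), integral_const_mul,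
    setIntegral_eq_measureReal_of_eq_zero_or_one hX h01, setIntegral_const, smul_eq_mul]
  have hprob_real : μ.real ({ω | X ω = 1} ∩ s) ≤ κ * μ.real s := by
    simpa [Measure.real, ENNReal.toReal_mul, ENNReal.toReal_ofReal hκ] using
      ENNReal.toReal_mono (ENNReal.mul_ne_top ENNReal.ofReal_ne_top (measure_ne_top μ s)) hprob
  rcases le_or_gt 0 c with hc_nonneg | hc_neg
  · positivity
  · have h1 := mul_le_mul_of_nonpos_left hprob_real hc_neg.le
    have h2 := mul_le_mul_of_nonneg_right hc (measureReal_nonneg (μ := μ) (s := s))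
    linarith

end Bernoulli

lemma integral_le_integral_add {Ω : Type*} [MeasurableSpace Ω] {μ : Measure Ω} {f g : Ω → ℝ}
    (hg : Integrable g μ) (hg_nonneg : 0 ≤ ∫ ω, g ω ∂μ) :
    ∫ ω, f ω ∂μ ≤ ∫ ω, (f ω + g ω) ∂μ := by
  by_cases hf : Integrable f μ
  · rw [integral_add hf hg]
    linarith
  · have hfg : ¬ Integrable (f + g) μ := by rwa [integrable_add_iff_integrable_left hg]
    rw [integral_undef hf, ← Pi.add_def, integral_undef hfg]
theorem gai_process_submartingale_general
    {Ω : Type*} [MeasurableSpace Ω] (μ : Measure Ω) [IsProbabilityMeasure μ]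
    (α η : ℝ)
    (R V : ℕ → Ω → ℝ) (W : ℕ → Ω → ℝ)
    (isNull : Bool) (j : ℕ) (hj : 1 ≤ j) (r : ℕ → Bool)
    (φ ψ αl ρ : ℝ)
    (hRmeas : ∀ i, Measurable (R i))
    (hR01 : ∀ i ω, R i ω = 0 ∨ R i ω = 1)
    (hVj : ∀ ω, V j ω = if isNull then R j ω else 0)
    (hαl0 : 0 < αl)
    (hρ0 : 0 < ρ)
    (hφ : 0 ≤ φ)
    (hψle : ψ ≤ min (φ / ρ + α) (φ / αl + α - 1))
    (hupd : ∀ ω ∈ histEvent R j r, W j ω = W (j - 1) ω - φ + R j ω * ψ)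
    (hcondNull : isNull = true →
      μ ({ω | R j ω = 1} ∩ histEvent R j r) ≤
        ENNReal.ofReal αl * μ (histEvent R j r))
    (hcondAlt : isNull = false →
      μ ({ω | R j ω = 1} ∩ histEvent R j r) ≤
        ENNReal.ofReal ρ * μ (histEvent R j r)) :
    ∫ ω in histEvent R j r,
        (α * (∑ i ∈ Finset.Icc 1 (j - 1), R i ω)
          - (∑ i ∈ Finset.Icc 1 (j - 1), V i ω) + α * η - W (j - 1) ω) ∂μ ≤
      ∫ ω in histEvent R j r,
        (α * (∑ i ∈ Finset.Icc 1 j, R i ω)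
          - (∑ i ∈ Finset.Icc 1 j, V i ω) + α * η - W j ω) ∂μ := by
  obtain ⟨k, rfl⟩ : ∃ k, j = k + 1 := ⟨j - 1, by omega⟩
  set E := histEvent R (k + 1) r
  set b : ℝ := α - if isNull then 1 else 0
  set κ : ℝ := if isNull then αl else ρ
  have hincrement : Set.EqOn (gaiProcess α η R V W (k + 1))
      (fun ω => gaiProcess α η R V W k ω + ((b - ψ) * R (k + 1) ω + φ)) E := by
    intro ω hω
    rw [gaiProcess_succ, hupd ω hω, hVj, Nat.add_sub_cancel]
    cases isNull <;> simp only [b, Bool.false_eq_true, if_true, if_false] <;> ring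
  have hκ : 0 < κ := by cases isNull <;> assumption
  have hslope : -φ ≤ (b - ψ) * κ := by
    have hψ : ψ - b ≤ φ / κ := by
      cases isNull <;> simp only [κ, b, Bool.false_eq_true, if_true, if_false] <;>
        linarith [min_le_left (φ / ρ + α) (φ / αl + α - 1),
          min_le_right (φ / ρ + α) (φ / αl + α - 1)]
    linarith [(le_div_iff₀ hκ).mp hψ]
  have hprob : μ ({ω | R (k + 1) ω = 1} ∩ E) ≤ ENNReal.ofReal κ * μ E := by
    cases isNull
    · exact hcondAlt rfl
    · exact hcondNull rfl
  change ∫ ω in E, gaiProcess α η R V W k ω ∂μ ≤ ∫ ω in E, gaiProcess α η R V W (k + 1) ω ∂μ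
  rw [setIntegral_congr_fun (measurableSet_histEvent hRmeas _ r) hincrement]
  exact integral_le_integral_add
    (((integrable_of_eq_zero_or_one (hRmeas _) (hR01 _)).const_mul _).add (integrable_const φ))
    (setIntegral_mul_add_nonneg_of_measure_le (hRmeas _) (hR01 _) hκ.le hφ hslope hprob)

/-- The Generalized Alpha Investing process `A(j) = α·R(j) − V(j) + αη − W(j)` is a
sub-martingale with respect to the filtration generated by the rejection
indicators: conditionally on any rejection history `r` of the first `j-1` tests,
the expected increment `A(j) − A(j-1)` is nonnegative, i.e. the integral of
`A(j)` over the history event dominates that of `A(j-1)`. -/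
theorem gai_process_submartingale
    {Ω : Type*} [MeasurableSpace Ω] (μ : Measure Ω) [IsProbabilityMeasure μ]
    (α η : ℝ) (hα0 : 0 < α) (hα1 : α < 1)
    (R V : ℕ → Ω → ℝ) (W : ℕ → Ω → ℝ)
    (isNull : Bool) (j : ℕ) (hj : 1 ≤ j) (r : ℕ → Bool)
    (φ ψ αl ρ : ℝ)
    (hRmeas : ∀ i, Measurable (R i))
    (hR01 : ∀ i ω, R i ω = 0 ∨ R i ω = 1)
    (hVj : ∀ ω, V j ω = if isNull then R j ω else 0)
    (hV0 : ∀ i, i ≠ j → ∀ ω, V i ω = 0 ∨ V i ω = R i ω)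
    (hαl0 : 0 < αl) (hαl1 : αl < 1)
    (hρ0 : 0 < ρ) (hρ1 : ρ ≤ 1)
    (hφ : 0 ≤ φ)
    (hψ0 : 0 ≤ ψ) (hψle : ψ ≤ min (φ / ρ + α) (φ / αl + α - 1))
    (hupd : ∀ ω ∈ histEvent R j r, W j ω = W (j - 1) ω - φ + R j ω * ψ)
    (hWint : ∀ i, IntegrableOn (W i) (histEvent R j r) μ)
    (hcondNull : isNull = true →
      μ ({ω | R j ω = 1} ∩ histEvent R j r) ≤
        ENNReal.ofReal αl * μ (histEvent R j r))
    (hcondAlt : isNull = false →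
      μ ({ω | R j ω = 1} ∩ histEvent R j r) ≤
        ENNReal.ofReal ρ * μ (histEvent R j r)) :
    ∫ ω in histEvent R j r,
        (α * (∑ i ∈ Finset.Icc 1 (j - 1), R i ω)
          - (∑ i ∈ Finset.Icc 1 (j - 1), V i ω) + α * η - W (j - 1) ω) ∂μ ≤
      ∫ ω in histEvent R j r,
        (α * (∑ i ∈ Finset.Icc 1 j, R i ω)
          - (∑ i ∈ Finset.Icc 1 j, V i ω) + α * η - W j ω) ∂μ :=
  gai_process_submartingale_general μ α η R V W isNull j hj r φ ψ αl ρ hRmeas hR01 hVj hαl0 hρ0 hφ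
    hψle hupd hcondNull hcondAlt
end

section
/- ERO optimality: Let γ, ρ̄ : (0,1] → (0,1] with γ nondecreasing, γ/ρ̄ nondecreasing (equivalently ρ̄/γ nonincreasing), and γ(α)/α nonincreasing. Fix constants φ > 0 and 0 < a < 1. If α* solves φ/ρ̄(α*) = φ/α* − 1, then α* maximizes over α ∈ (0,1] the function g(α) = γ(α)·min(φ/ρ̄(α) + a, φ/α + a − 1). -/
/-- ERO optimality: if `α*` solves `φ/ρ̄(α*) = φ/α* − 1`, then `α*` maximizes
the expected reward `γ(α)·min(φ/ρ̄(α)+a, φ/α+a−1)` over levels `α ∈ (0,1]`. -/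
theorem ero_alpha_investing_optimal
    (γ ρ : ℝ → ℝ) (φ a : ℝ)
    (hφ : 0 < φ) (ha0 : 0 < a) (ha1 : a < 1)
    (hγmem : ∀ x ∈ Set.Ioc (0:ℝ) 1, γ x ∈ Set.Ioc (0:ℝ) 1)
    (hρmem : ∀ x ∈ Set.Ioc (0:ℝ) 1, ρ x ∈ Set.Ioc (0:ℝ) 1)
    (hγmono : MonotoneOn γ (Set.Ioc 0 1))
    (hγρ : MonotoneOn (fun x => γ x / ρ x) (Set.Ioc 0 1))
    (hγα : AntitoneOn (fun x => γ x / x) (Set.Ioc 0 1))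
    (αstar : ℝ) (hαstar : αstar ∈ Set.Ioc (0:ℝ) 1)
    (hsol : φ / ρ αstar = φ / αstar - 1) :
    ∀ x ∈ Set.Ioc (0:ℝ) 1,
      γ x * min (φ / ρ x + a) (φ / x + a - 1) ≤
        γ αstar * min (φ / ρ αstar + a) (φ / αstar + a - 1) := by
  intro x hx
  have hγx := hγmem x hx
  have hγs := hγmem αstar hαstar
  have heq : φ / ρ αstar + a = φ / αstar + a - 1 := by linarith
  rw [heq, min_self]
  rcases le_total x αstar with h | h
  · calc γ x * min (φ / ρ x + a) (φ / x + a - 1)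
        ≤ γ x * (φ / ρ x + a) :=
          mul_le_mul_of_nonneg_left (min_le_left _ _) hγx.1.le
      _ = φ * (γ x / ρ x) + a * γ x := by ring
      _ ≤ φ * (γ αstar / ρ αstar) + a * γ αstar := by
          have h1 := hγρ hx hαstar h
          have h2 := hγmono hx hαstar h
          have := mul_le_mul_of_nonneg_left h1 hφ.le
          have := mul_le_mul_of_nonneg_left h2 ha0.le
          simp only at *
          linarith
      _ = γ αstar * (φ / ρ αstar + a) := by ring
      _ = γ αstar * (φ / αstar + a - 1) := by rw [heq]
  · calc γ x * min (φ / ρ x + a) (φ / x + a - 1)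
        ≤ γ x * (φ / x + a - 1) :=
          mul_le_mul_of_nonneg_left (min_le_right _ _) hγx.1.le
      _ = φ * (γ x / x) + (a - 1) * γ x := by ring
      _ ≤ φ * (γ αstar / αstar) + (a - 1) * γ αstar := by
          have h1 := hγα hαstar hx h
          have h2 := hγmono hαstar hx h
          have := mul_le_mul_of_nonneg_left h1 hφ.le
          have h3 : (a - 1) * γ x ≤ (a - 1) * γ αstar := by nlinarith
          simp only at *
          linarith
      _ = γ αstar * (φ / αstar + a - 1) := by ring
end

section
/- Stability of QPD-ASR: suppose the j-th request has a level-sample function L satisfying L(n) ≤ b·q^n for all n, with b > 0 and 0 < q < 1. Let c* = log_q( (αη·q^{−n_0}) / (b + αη·q^{−n_0}) ). Then c* > 0 and the feasibility inequality L(n_{j-1} + c*) ≤ W(j-1)·(1 − q^{c*}) holds, so c* is an upper bound on the cost assigned to this request. -/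
/-!
Put `A = αη·q^{-n₀}` and `c* = log_q (A / (b + A))`. Since `0 < A / (b + A) < 1` and `q < 1`,
`c*` is positive, and `q^{c*} = A / (b + A)` gives `b·q^{c*} = A·(1 - q^{c*})`. Hence
`L(n + c*) ≤ b·q^n·q^{c*} = A·q^n·(1 - q^{c*}) ≤ W·(1 - q^{c*})`, the last step being the
wealth bound `A·q^n = αη·q^{n - n₀} ≤ W`.
-/

open Real

section GeometricCost

variable {q A b : ℝ}

theorem logb_div_add_pos (hq0 : 0 < q) (hq1 : q < 1) (hA : 0 < A) (hb : 0 < b) :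
    0 < logb q (A / (b + A)) :=
  logb_pos_of_base_lt_one hq0 hq1 (by positivity) ((div_lt_one (by positivity)).2 (by linarith))

theorem rpow_logb_div_add (hq0 : 0 < q) (hq1 : q ≠ 1) (hA : 0 < A) (hb : 0 ≤ b) :
    q ^ logb q (A / (b + A)) = A / (b + A) :=
  rpow_logb hq0 hq1 (by positivity)

theorem mul_rpow_logb_div_add (hq0 : 0 < q) (hq1 : q ≠ 1) (hA : 0 < A) (hb : 0 ≤ b) :
    b * q ^ logb q (A / (b + A)) = A * (1 - q ^ logb q (A / (b + A))) := by
  rw [rpow_logb_div_add hq0 hq1 hA hb]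
  field_simp
  ring

theorem one_sub_rpow_logb_div_add_nonneg (hq0 : 0 < q) (hq1 : q ≠ 1) (hA : 0 < A) (hb : 0 ≤ b) :
    0 ≤ 1 - q ^ logb q (A / (b + A)) := by
  rw [rpow_logb_div_add hq0 hq1 hA hb, sub_nonneg]
  exact div_le_one_of_le₀ (by linarith) (by positivity)

theorem le_mul_one_sub_rpow_logb_div_add (hq0 : 0 < q) (hq1 : q ≠ 1) (hA : 0 < A) (hb : 0 ≤ b)
    {L : ℝ → ℝ} (hL : ∀ x, L x ≤ b * q ^ x) {n W : ℝ} (hW : A * q ^ n ≤ W) :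
    L (n + logb q (A / (b + A))) ≤ W * (1 - q ^ logb q (A / (b + A))) := by
  set c := logb q (A / (b + A))
  calc L (n + c) ≤ b * q ^ (n + c) := hL _
    _ = A * q ^ n * (1 - q ^ c) := by
        rw [rpow_add hq0, mul_left_comm, mul_rpow_logb_div_add hq0 hq1 hA hb]
        ring
    _ ≤ W * (1 - q ^ c) :=
        mul_le_mul_of_nonneg_right hW (one_sub_rpow_logb_div_add_nonneg hq0 hq1 hA hb)

end GeometricCost

/-- Stability of QPD-ASR: if the level-sample function satisfies `L(n) ≤ b·q^n`,
then `c* = log_q(αη·q^{−n₀}/(b + αη·q^{−n₀}))` is positive and the feasibility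
inequality `L(n_{j-1} + c*) ≤ W(j-1)·(1 − q^{c*})` holds whenever
`W(j-1) ≥ αη·q^{n_{j-1} − n₀}`; hence `c*` bounds the assigned cost. -/
theorem qpd_asr_stability
    (α η b q : ℝ) (n0 : ℕ)
    (hα : 0 < α) (hη : 0 < η) (hb : 0 < b) (hq0 : 0 < q) (hq1 : q < 1) :
    0 < Real.logb q (α * η * q ^ (-(n0 : ℝ)) / (b + α * η * q ^ (-(n0 : ℝ)))) ∧
      ∀ (L : ℝ → ℝ) (n W : ℝ),
        (∀ x : ℝ, L x ≤ b * q ^ x) →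
        α * η * q ^ (n - n0) ≤ W →
        L (n + Real.logb q (α * η * q ^ (-(n0 : ℝ)) / (b + α * η * q ^ (-(n0 : ℝ))))) ≤
          W * (1 - q ^ Real.logb q
            (α * η * q ^ (-(n0 : ℝ)) / (b + α * η * q ^ (-(n0 : ℝ))))) := by
  have hA : 0 < α * η * q ^ (-(n0 : ℝ)) := by positivity
  refine ⟨logb_div_add_pos hq0 hq1 hA hb, fun L n W hL hW => ?_⟩
  have hwealth : α * η * q ^ (-(n0 : ℝ)) * q ^ n ≤ W := by
    rwa [mul_assoc, ← rpow_add hq0, neg_add_eq_sub]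
  exact le_mul_one_sub_rpow_logb_div_add hq0 hq1.ne hA hb.le hL hwealth
end

section
/- Alpha Spending with Rewards is a special case of Generalized Alpha Investing: given an Alpha Spending with Rewards procedure with parameter k > 0, wealth W, levels α_j and rewards ψ_j satisfying ψ_j ≤ min(α_j/ρ̄_j + α/k, 1 − (1−α)/k), the rescaled process W'(j) = k·W(j) with costs φ_j = k·α_j and rewards ψ'_j = k·ψ_j is a Generalized Alpha Investing procedure, i.e. W'(0) = αη, W'(j) = W'(j-1) − φ_j + R_j·ψ'_j, W'(j) ≥ 0, and 0 ≤ ψ'_j ≤ min(φ_j/ρ̄_j + α, φ_j/α_j + α − 1). -/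
/-! Multiplying by `k > 0` preserves the wealth recursion and its nonnegativity, and turns the two
reward caps into the GAI ones: `k (α_j/ρ̄_j + α/k) = φ_j/ρ̄_j + α` and
`k (1 - (1 - α)/k) = k - 1 + α = φ_j/α_j + α - 1`. -/

section RewardCap

variable {K : Type*} [Field K] [LinearOrder K] [IsStrictOrderedRing K] {k ψ : K}

theorem mul_le_mul_div_add_of_le_div_add_div {a ρ c : K} (hk : 0 < k)
    (h : ψ ≤ a / ρ + c / k) : k * ψ ≤ k * a / ρ + c :=
  calc k * ψ ≤ k * (a / ρ + c / k) := mul_le_mul_of_nonneg_left h hk.le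
    _ = k * a / ρ + c := by field_simp

theorem mul_le_mul_div_self_add_sub_one {a c : K} (hk : 0 < k) (ha : a ≠ 0)
    (h : ψ ≤ 1 - (1 - c) / k) : k * ψ ≤ k * a / a + c - 1 :=
  calc k * ψ ≤ k * (1 - (1 - c) / k) := mul_le_mul_of_nonneg_left h hk.le
    _ = k * a / a + c - 1 := by rw [mul_div_cancel_right₀ k ha]; field_simp; ring

end RewardCap

theorem asr_special_case_of_gai_general
    (α η k : ℝ) (hk : 0 < k)
    (W αl ψ ρ R : ℕ → ℝ)
    (hαl : ∀ j, 0 < αl j)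
    (hW0 : W 0 = α * η / k)
    (hupd : ∀ j, 1 ≤ j → W j = W (j - 1) - αl j + R j * ψ j)
    (hWnn : ∀ j, 0 ≤ W j)
    (hψnn : ∀ j, 0 ≤ ψ j)
    (hψle : ∀ j, ψ j ≤ min (αl j / ρ j + α / k) (1 - (1 - α) / k)) :
    k * W 0 = α * η ∧
      (∀ j, 1 ≤ j → k * W j = k * W (j - 1) - k * αl j + R j * (k * ψ j)) ∧
      (∀ j, 0 ≤ k * W j) ∧
      (∀ j, 0 ≤ k * ψ j ∧
        k * ψ j ≤ min ((k * αl j) / ρ j + α) ((k * αl j) / αl j + α - 1)) := by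
  refine ⟨by rw [hW0, mul_div_cancel₀ _ hk.ne'], fun j hj => by rw [hupd j hj]; ring,
    fun j => mul_nonneg hk.le (hWnn j), fun j => ⟨mul_nonneg hk.le (hψnn j), ?_⟩⟩
  obtain ⟨hψρ, hψα⟩ := le_min_iff.mp (hψle j)
  exact le_min (mul_le_mul_div_add_of_le_div_add_div hk hψρ)
    (mul_le_mul_div_self_add_sub_one hk (hαl j).ne' hψα)

/-- Alpha Spending with Rewards is a special case of Generalized Alpha Investing:
rescaling the wealth by `k` (`W' = k·W`, costs `φ_j = k·α_j`, rewards
`ψ'_j = k·ψ_j`) yields a Generalized Alpha Investing procedure. -/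
theorem asr_special_case_of_gai
    (α η k : ℝ) (hα0 : 0 < α) (hα1 : α < 1) (hη : 0 < η) (hk : 0 < k)
    (W αl ψ ρ R : ℕ → ℝ)
    (hαl : ∀ j, 0 < αl j) (hρ : ∀ j, 0 < ρ j)
    (hW0 : W 0 = α * η / k)
    (hupd : ∀ j, 1 ≤ j → W j = W (j - 1) - αl j + R j * ψ j)
    (hWnn : ∀ j, 0 ≤ W j)
    (hψnn : ∀ j, 0 ≤ ψ j)
    (hψle : ∀ j, ψ j ≤ min (αl j / ρ j + α / k) (1 - (1 - α) / k)) :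
    k * W 0 = α * η ∧
      (∀ j, 1 ≤ j → k * W j = k * W (j - 1) - k * αl j + R j * (k * ψ j)) ∧
      (∀ j, 0 ≤ k * W j) ∧
      (∀ j, 0 ≤ k * ψ j ∧
        k * ψ j ≤ min ((k * αl j) / ρ j + α) ((k * αl j) / αl j + α - 1)) :=
  asr_special_case_of_gai_general α η k hk W αl ψ ρ R hαl hW0 hupd hWnn hψnn hψle
end

section
/- Given the sub-martingale A(j) = α·R(j) − V(j) + αη − W(j) with A(0) = 0 and the nonnegativity of the wealth W(m) ≥ 0, it follows that E(α·R(m) − V(m)) + αη ≥ E(W(m)) ≥ 0, hence E(V(m)) ≤ α·(E(R(m)) + η). -/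
open MeasureTheory

/-- From the sub-martingale property (`E(A(m)) ≥ A(0) = 0` for
`A(m) = α·R(m) − V(m) + αη − W(m)`) and nonnegativity of the wealth `W(m)`,
it follows that `E(α·R(m) − V(m)) + αη ≥ E(W(m)) ≥ 0`, hence
`E(V(m)) ≤ α·(E(R(m)) + η)`. -/
theorem submartingale_gives_mfdr_bound
    {Ω : Type*} [MeasurableSpace Ω] (μ : Measure Ω) [IsProbabilityMeasure μ]
    (α η : ℝ) (hα : 0 < α) (hη : 0 < η)
    (R V W : Ω → ℝ)
    (hRint : Integrable R μ) (hVint : Integrable V μ) (hWint : Integrable W μ)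
    (hWnn : ∀ᵐ ω ∂μ, 0 ≤ W ω)
    (hsub : 0 ≤ ∫ ω, (α * R ω - V ω + α * η - W ω) ∂μ) :
    (∫ ω, W ω ∂μ) ≤ (∫ ω, (α * R ω - V ω) ∂μ) + α * η ∧
      0 ≤ ∫ ω, W ω ∂μ ∧
      (∫ ω, V ω ∂μ) ≤ α * ((∫ ω, R ω ∂μ) + η) := by
  have hRV : Integrable (fun ω => α * R ω - V ω) μ := (hRint.const_mul α).sub hVint
  have hRVc : Integrable (fun ω => α * R ω - V ω + α * η) μ :=
    hRV.add (integrable_const _)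
  have hsplit : (∫ ω, (α * R ω - V ω + α * η - W ω) ∂μ)
      = (∫ ω, (α * R ω - V ω) ∂μ) + α * η - ∫ ω, W ω ∂μ := by
    rw [integral_sub hRVc hWint, integral_add hRV (integrable_const _),
      integral_const]
    simp
  have hW0 : 0 ≤ ∫ ω, W ω ∂μ := integral_nonneg_of_ae hWnn
  have h1 : (∫ ω, W ω ∂μ) ≤ (∫ ω, (α * R ω - V ω) ∂μ) + α * η := by
    rw [hsplit] at hsub; linarith
  refine ⟨h1, hW0, ?_⟩
  have h2 : (∫ ω, (α * R ω - V ω) ∂μ)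
      = α * (∫ ω, R ω ∂μ) - ∫ ω, V ω ∂μ := by
    rw [integral_sub (hRint.const_mul α) hVint, integral_const_mul]
  rw [h2] at h1
  linarith [mul_add α (∫ ω, R ω ∂μ) η]
end
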